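/- arXiv:2107.00426 — 5 statements merged into one kernel-verified Lean document; each statement's English description precedes it below -/
import Mathlib

section
/- Let n > n' ≥ 1 and let M be a real symmetric n×n matrix. Let M' be the leading principal n'×n' submatrix of M (so M'ᵢⱼ = Mᵢⱼ for all 1 ≤ i, j ≤ n'). Write σ_M = sig(M), σ_{M'} = sig(M'), k = nul(M), and k' = nul(M'). Then |σ_M − σ_{M'}| ≤ (n − n') − (k − k'). -/
/-- The signature of a real symmetric (Hermitian) matrix: the number of positive
eigenvalues minus the number of negative eigenvalues, counted with multiplicity. -/
noncomputable def matSig {m : Type} [Fintype m] [DecidableEq m]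
    (M : Matrix m m ℝ) : ℤ := by
  classical
  exact if hM : M.IsHermitian then
    ((Finset.univ.filter fun i => 0 < hM.eigenvalues i).card : ℤ) -
    ((Finset.univ.filter fun i => hM.eigenvalues i < 0).card : ℤ)
  else 0

/-- The nullity of a real matrix: the size minus the rank (equivalently, the
multiplicity of the eigenvalue 0 for a symmetric matrix). -/
noncomputable def matNul {m : Type} [Fintype m] [DecidableEq m]
    (M : Matrix m m ℝ) : ℕ :=
  Fintype.card m - M.rank

/-!
By Sylvester's law of inertia, the numbers `p` and `q` of positive and negative eigenvalues of a
real symmetric matrix `A` are the maximal dimensions of subspaces on which the quadratic form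
`x ↦ xᵀ A x` is positive, resp. negative definite, and `rank A = p + q`. The quadratic form of a
principal submatrix is that of `A` pulled back along a linear map, so neither index can grow:
`p' ≤ p`, `q' ≤ q`. Hence `|(p - q) - (p' - q')| ≤ (p - p') + (q - q') = rank A - rank A'`.
-/

open Module QuadraticMap Matrix Finset

section QuadraticForm

variable {𝕜 M M' : Type*} [Field 𝕜] [LinearOrder 𝕜] [AddCommGroup M] [Module 𝕜 M]
  [FiniteDimensional 𝕜 M] [AddCommGroup M'] [Module 𝕜 M']

theorem finrank_le_sigPos_of_posDef_comp (Q : QuadraticForm 𝕜 M) (f : M' →ₗ[𝕜] M)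
    (hf : (Q.comp f).PosDef) : finrank 𝕜 M' ≤ sigPos Q := by
  have hinj : Function.Injective f := by
    refine (injective_iff_map_eq_zero f).2 fun x hx => ?_
    by_contra hx0
    simpa [hx] using hf x hx0
  rw [← LinearMap.finrank_range_of_inj hinj]
  refine le_sigPos_of_posDef Q fun ⟨_, x, rfl⟩ hy => hf x fun hx => hy ?_
  simp [hx]

theorem sigPos_comp_le [FiniteDimensional 𝕜 M'] (Q : QuadraticForm 𝕜 M) (f : M' →ₗ[𝕜] M) :
    sigPos (Q.comp f) ≤ sigPos Q := by
  obtain ⟨V, hV, hpos⟩ := exists_finrank_eq_sigPos_and_posDef (Q.comp f)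
  exact hV ▸ finrank_le_sigPos_of_posDef_comp Q (f ∘ₗ V.subtype) hpos

theorem sigNeg_comp_le [FiniteDimensional 𝕜 M'] (Q : QuadraticForm 𝕜 M) (f : M' →ₗ[𝕜] M) :
    sigNeg (Q.comp f) ≤ sigNeg Q :=
  sigPos_comp_le (-Q) f

end QuadraticForm

namespace Matrix

section CommRing

variable {R m n : Type*} [CommRing R] [Fintype m] [DecidableEq m]

theorem toQuadraticForm'_apply (A : Matrix m m R) (x : m → R) :
    A.toQuadraticForm' x = x ⬝ᵥ A *ᵥ x :=
  toLinearMap₂'_apply' A x x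

theorem toQuadraticForm'_diagonal (w : m → R) :
    (diagonal w).toQuadraticForm' = weightedSumSquares R w := by
  ext x
  simp [toQuadraticForm'_apply, weightedSumSquares_apply, dotProduct, mulVec_diagonal,
    mul_left_comm]

theorem transpose_submatrix_one_mul_mul (A : Matrix m m R) (e : n → m) :
    ((1 : Matrix m m R).submatrix id e)ᵀ * A * (1 : Matrix m m R).submatrix id e =
      A.submatrix e e := by
  ext i j
  simp [Matrix.mul_apply, Matrix.one_apply]

variable [Fintype n] [DecidableEq n]

theorem toQuadraticForm'_transpose_mul_mul (A : Matrix m m R) (B : Matrix m n R) :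
    (Bᵀ * A * B).toQuadraticForm' = A.toQuadraticForm'.comp (toLin' B) := by
  ext x
  simp [toQuadraticForm'_apply, ← mulVec_mulVec, dotProduct_mulVec, vecMul_transpose]

theorem toQuadraticForm'_submatrix (A : Matrix m m R) (e : n → m) :
    (A.submatrix e e).toQuadraticForm' =
      A.toQuadraticForm'.comp (toLin' ((1 : Matrix m m R).submatrix id e)) := by
  rw [← transpose_submatrix_one_mul_mul, toQuadraticForm'_transpose_mul_mul]

end CommRing

section LinearOrderedField

variable {𝕜 m n : Type*} [Field 𝕜] [LinearOrder 𝕜] [Fintype m] [DecidableEq m] [Fintype n]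
  [DecidableEq n]

theorem sigPos_toQuadraticForm'_submatrix_le (A : Matrix m m 𝕜) (e : n → m) :
    sigPos (A.submatrix e e).toQuadraticForm' ≤ sigPos A.toQuadraticForm' := by
  rw [toQuadraticForm'_submatrix]
  exact sigPos_comp_le _ _

theorem sigNeg_toQuadraticForm'_submatrix_le (A : Matrix m m 𝕜) (e : n → m) :
    sigNeg (A.submatrix e e).toQuadraticForm' ≤ sigNeg A.toQuadraticForm' := by
  rw [toQuadraticForm'_submatrix]
  exact sigNeg_comp_le _ _

end LinearOrderedField

namespace IsHermitian

variable {ι : Type*} [Fintype ι] [DecidableEq ι] {A : Matrix ι ι ℝ}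

theorem toQuadraticForm'_eq_comp (hA : A.IsHermitian) :
    A.toQuadraticForm' = (weightedSumSquares ℝ hA.eigenvalues).comp
      (toLin' (star (hA.eigenvectorUnitary : Matrix ι ι ℝ))) := by
  have hA_eq : A = (star (hA.eigenvectorUnitary : Matrix ι ι ℝ))ᵀ * diagonal hA.eigenvalues *
      star (hA.eigenvectorUnitary : Matrix ι ι ℝ) := by
    conv_lhs => rw [hA.spectral_theorem]
    simp [star_eq_conjTranspose]
  conv_lhs => rw [hA_eq]
  rw [toQuadraticForm'_transpose_mul_mul, toQuadraticForm'_diagonal]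

theorem toQuadraticForm'_equivalent (hA : A.IsHermitian) :
    A.toQuadraticForm'.Equivalent (weightedSumSquares ℝ hA.eigenvalues) := by
  rw [hA.toQuadraticForm'_eq_comp]
  exact ⟨(isometryEquivOfCompLinearEquiv _
    (UnitaryGroup.toLinearEquiv (star hA.eigenvectorUnitary))).symm⟩

theorem sigPos_toQuadraticForm' (hA : A.IsHermitian) :
    sigPos A.toQuadraticForm' = #{i | 0 < hA.eigenvalues i} := by
  rw [QuadraticForm.sigPos_of_equiv_weightedSumSquares hA.toQuadraticForm'_equivalent,
    ← Set.ncard_coe_finset]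
  simp

theorem sigNeg_toQuadraticForm' (hA : A.IsHermitian) :
    sigNeg A.toQuadraticForm' = #{i | hA.eigenvalues i < 0} := by
  rw [QuadraticForm.sigNeg_of_equiv_weightedSumSquares hA.toQuadraticForm'_equivalent,
    ← Set.ncard_coe_finset]
  simp

theorem rank_eq_sigPos_add_sigNeg (hA : A.IsHermitian) :
    A.rank = sigPos A.toQuadraticForm' + sigNeg A.toQuadraticForm' := by
  rw [hA.rank_eq_card_non_zero_eigs, hA.sigPos_toQuadraticForm', hA.sigNeg_toQuadraticForm',
    ← card_union_of_disjoint (disjoint_filter.2 fun _ _ h => h.asymm), Fintype.card_subtype]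
  congr 1
  ext i
  simp only [mem_filter, mem_univ, true_and, mem_union]
  exact ne_iff_lt_or_gt.trans or_comm

end IsHermitian

end Matrix

section Inertia

variable {ι ι' : Type} [Fintype ι] [DecidableEq ι] [Fintype ι'] [DecidableEq ι']
  {A : Matrix ι ι ℝ}

theorem matSig_eq_sigPos_sub_sigNeg (hA : A.IsHermitian) :
    matSig A = sigPos A.toQuadraticForm' - sigNeg A.toQuadraticForm' := by
  rw [matSig, dif_pos hA, hA.sigPos_toQuadraticForm', hA.sigNeg_toQuadraticForm']

theorem matNul_eq_card_sub_sigPos_sub_sigNeg (hA : A.IsHermitian) :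
    (matNul A : ℤ) =
      Fintype.card ι - (sigPos A.toQuadraticForm' + sigNeg A.toQuadraticForm') := by
  rw [matNul, Nat.cast_sub A.rank_le_card_width, hA.rank_eq_sigPos_add_sigNeg, Nat.cast_add]

theorem abs_matSig_sub_matSig_submatrix_le (hA : A.IsHermitian) (e : ι' → ι) :
    |matSig A - matSig (A.submatrix e e)| ≤ ((Fintype.card ι : ℤ) - Fintype.card ι') -
      ((matNul A : ℤ) - matNul (A.submatrix e e)) := by
  have hpos := sigPos_toQuadraticForm'_submatrix_le A e
  have hneg := sigNeg_toQuadraticForm'_submatrix_le A e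
  rw [matSig_eq_sigPos_sub_sigNeg hA, matSig_eq_sigPos_sub_sigNeg (hA.submatrix e),
    matNul_eq_card_sub_sigPos_sub_sigNeg hA,
    matNul_eq_card_sub_sigPos_sub_sigNeg (hA.submatrix e), abs_sub_le_iff]
  omega

end Inertia

theorem leading_principal_submatrix_sig_nul_bound_general
    (n n' : ℕ) (hlt : n' < n)
    (M : Matrix (Fin n) (Fin n) ℝ) (hM : M.IsSymm)
    (M' : Matrix (Fin n') (Fin n') ℝ)
    (hM' : ∀ i j : Fin n', M' i j = M (Fin.castLE hlt.le i) (Fin.castLE hlt.le j)) :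
    |matSig M - matSig M'| ≤ ((n : ℤ) - (n' : ℤ)) - ((matNul M : ℤ) - (matNul M' : ℤ)) := by
  obtain rfl : M' = M.submatrix (Fin.castLE hlt.le) (Fin.castLE hlt.le) := Matrix.ext hM'
  simpa using
    abs_matSig_sub_matSig_submatrix_le (isHermitian_iff_isSymm.2 hM) (Fin.castLE hlt.le)

/-- Let `n > n' ≥ 1` and let `M` be a real symmetric `n × n` matrix.  Let `M'` be the
leading principal `n' × n'` submatrix of `M`.  Then
`|sig M − sig M'| ≤ (n − n') − (nul M − nul M')`. -/
theorem leading_principal_submatrix_sig_nul_bound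
    (n n' : ℕ) (hn' : 1 ≤ n') (hlt : n' < n)
    (M : Matrix (Fin n) (Fin n) ℝ) (hM : M.IsSymm)
    (M' : Matrix (Fin n') (Fin n') ℝ)
    (hM' : ∀ i j : Fin n', M' i j = M (Fin.castLE hlt.le i) (Fin.castLE hlt.le j)) :
    |matSig M - matSig M'| ≤ ((n : ℤ) - (n' : ℤ)) - ((matNul M : ℤ) - (matNul M' : ℤ)) :=
  leading_principal_submatrix_sig_nul_bound_general n n' hlt M hM M' hM'
end

section
/- Let G and G' be real symmetric n×n matrices that agree in every entry except the (1,1) entry, where G'₁₁ = G₁₁ + 2. If nul(G) = nul(G'), then either sig(G') = sig(G) or sig(G') = sig(G) + 2. -/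
/-! `G' = G + 2 e₀ e₀ᵀ`, so the quadratic form of `G'` dominates that of `G` and agrees
with it on the hyperplane `x₀ = 0`. The number of positive eigenvalues is the largest dimension of
a subspace on which the form is positive definite, so it grows by `0` or `1` from `G` to `G'`.
Since `sig = 2 · #positive + nul - n`, equal nullities give the claim. -/

open Finset Matrix Module Submodule
open scoped RealInnerProductSpace

theorem Submodule.finrank_le_finrank_inf_ker_add_one {K V : Type*} [Field K] [AddCommGroup V]
    [Module K V] [FiniteDimensional K V] (W : Submodule K V) (l : V →ₗ[K] K) :
    finrank K W ≤ finrank K ↥(W ⊓ LinearMap.ker l) + 1 := by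
  have hker : LinearMap.ker (l.domRestrict W) = (LinearMap.ker l).comap W.subtype :=
    LinearMap.ker_comp W.subtype l
  have hrange : finrank K (LinearMap.range (l.domRestrict W)) ≤ 1 := by
    simpa using Submodule.finrank_le (LinearMap.range (l.domRestrict W))
  have := (l.domRestrict W).finrank_range_add_finrank_ker
  rw [hker, ← Submodule.finrank_map_subtype_eq, Submodule.map_comap_subtype] at this
  omega

namespace Matrix

variable {m : Type*} [Fintype m] [DecidableEq m] {A B : Matrix m m ℝ}

noncomputable def quadForm (A : Matrix m m ℝ) (x : EuclideanSpace ℝ m) : ℝ :=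
  ⟪x, toEuclideanLin A x⟫

theorem quadForm_add (A B : Matrix m m ℝ) (x : EuclideanSpace ℝ m) :
    (A + B).quadForm x = A.quadForm x + B.quadForm x := by
  simp [quadForm, inner_add_right]

theorem quadForm_single_self (i : m) (c : ℝ) (x : EuclideanSpace ℝ m) :
    (single i i c).quadForm x = c * x i ^ 2 := by
  simp [quadForm, EuclideanSpace.inner_eq_star_dotProduct, single_mulVec_eq, sq, mul_assoc]

namespace IsHermitian

variable (hA : A.IsHermitian)

theorem toEuclideanLin_eigenvectorBasis (j : m) :
    toEuclideanLin A (hA.eigenvectorBasis j) = hA.eigenvalues j • hA.eigenvectorBasis j := by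
  ext i
  simpa using congrFun (hA.mulVec_eigenvectorBasis j) i

theorem quadForm_sum_smul_eigenvectorBasis (s : Finset m) (c : m → ℝ) :
    A.quadForm (∑ i ∈ s, c i • hA.eigenvectorBasis i) = ∑ i ∈ s, hA.eigenvalues i * c i ^ 2 := by
  have hmap : toEuclideanLin A (∑ i ∈ s, c i • hA.eigenvectorBasis i)
      = ∑ i ∈ s, (hA.eigenvalues i * c i) • hA.eigenvectorBasis i := by
    simp only [map_sum, map_smul, toEuclideanLin_eigenvectorBasis hA, smul_smul, mul_comm]
  rw [quadForm, hmap, hA.eigenvectorBasis.orthonormal.inner_sum]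
  refine Finset.sum_congr rfl fun i _ => ?_
  simp only [conj_trivial]
  ring

noncomputable def eigenspan (s : Finset m) : Submodule ℝ (EuclideanSpace ℝ m) :=
  span ℝ (hA.eigenvectorBasis '' s)

theorem finrank_eigenspan (s : Finset m) : finrank ℝ (hA.eigenspan s) = #s := by
  rw [eigenspan, Set.image_eq_range,
    finrank_span_eq_card (b := fun i : (s : Set m) => hA.eigenvectorBasis i)
      (hA.eigenvectorBasis.orthonormal.linearIndependent.comp _ Subtype.val_injective)]
  simp

theorem quadForm_pos_of_mem_eigenspan {x : EuclideanSpace ℝ m}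
    (hx : x ∈ hA.eigenspan {i | 0 < hA.eigenvalues i}) (hx0 : x ≠ 0) : 0 < A.quadForm x := by
  obtain ⟨c, rfl⟩ := (mem_span_image_finset_iff_exists_fun' ℝ).1 hx
  obtain ⟨i, hi, hci⟩ : ∃ i ∈ ({i | 0 < hA.eigenvalues i} : Finset m), c i ≠ 0 := by
    by_contra! h
    exact hx0 (sum_eq_zero fun i hi => by simp [h i hi])
  rw [hA.quadForm_sum_smul_eigenvectorBasis]
  refine sum_pos' (fun j hj => ?_) ⟨i, hi, ?_⟩
  · exact mul_nonneg (mem_filter.1 hj).2.le (sq_nonneg _)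
  · exact mul_pos (mem_filter.1 hi).2 (by positivity)

theorem quadForm_nonpos_of_mem_eigenspan {x : EuclideanSpace ℝ m}
    (hx : x ∈ hA.eigenspan {i | ¬0 < hA.eigenvalues i}) : A.quadForm x ≤ 0 := by
  obtain ⟨c, rfl⟩ := (mem_span_image_finset_iff_exists_fun' ℝ).1 hx
  rw [hA.quadForm_sum_smul_eigenvectorBasis]
  exact sum_nonpos fun j hj => mul_nonpos_of_nonpos_of_nonneg
    (not_lt.1 (mem_filter.1 hj).2) (sq_nonneg _)

theorem finrank_le_card_pos_eigenvalues (V : Submodule ℝ (EuclideanSpace ℝ m))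
    (hV : ∀ x ∈ V, x ≠ 0 → 0 < A.quadForm x) : finrank ℝ V ≤ #{i | 0 < hA.eigenvalues i} := by
  have hdisj : Disjoint V (hA.eigenspan {i | ¬0 < hA.eigenvalues i}) := by
    refine Submodule.disjoint_def.2 fun x hxV hxW => ?_
    by_contra hx0
    exact (hV x hxV hx0).not_ge (hA.quadForm_nonpos_of_mem_eigenspan hxW)
  have hdim := Submodule.finrank_add_finrank_le_of_disjoint hdisj
  have hcard := card_filter_add_card_filter_not (s := univ) (fun i => 0 < hA.eigenvalues i)
  rw [finrank_eigenspan, finrank_euclideanSpace] at hdim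
  rw [card_univ] at hcard
  omega

theorem card_pos_eigenvalues_le_of_quadForm_le (hB : B.IsHermitian)
    (h : ∀ x, A.quadForm x ≤ B.quadForm x) :
    #{i | 0 < hA.eigenvalues i} ≤ #{i | 0 < hB.eigenvalues i} := by
  rw [← hA.finrank_eigenspan]
  exact hB.finrank_le_card_pos_eigenvalues _ fun x hx hx0 =>
    (hA.quadForm_pos_of_mem_eigenspan hx hx0).trans_le (h x)

theorem card_pos_eigenvalues_le_add_one_of_quadForm_eqOn_ker (hB : B.IsHermitian)
    (l : EuclideanSpace ℝ m →ₗ[ℝ] ℝ) (h : ∀ x, l x = 0 → B.quadForm x = A.quadForm x) :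
    #{i | 0 < hB.eigenvalues i} ≤ #{i | 0 < hA.eigenvalues i} + 1 := by
  have hcodim := (hB.eigenspan {i | 0 < hB.eigenvalues i}).finrank_le_finrank_inf_ker_add_one l
  have hpos := hA.finrank_le_card_pos_eigenvalues _ fun x hx hx0 => by
    rw [← h x (LinearMap.mem_ker.1 (Submodule.mem_inf.1 hx).2)]
    exact hB.quadForm_pos_of_mem_eigenspan (Submodule.mem_inf.1 hx).1 hx0
  rw [finrank_eigenspan] at hcodim
  omega

end IsHermitian

end Matrix

namespace Matrix.IsHermitian

variable {m : Type} [Fintype m] [DecidableEq m] {A : Matrix m m ℝ} (hA : A.IsHermitian)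

theorem matNul_eq_card_eigenvalues_eq_zero : matNul A = #{i | hA.eigenvalues i = 0} := by
  have hcard := card_filter_add_card_filter_not (s := univ) (fun i => hA.eigenvalues i = 0)
  rw [card_univ] at hcard
  rw [matNul, hA.rank_eq_card_non_zero_eigs, Fintype.card_subtype]
  simp only [ne_eq]
  omega

theorem matSig_eq : matSig A = 2 * #{i | 0 < hA.eigenvalues i} + matNul A - Fintype.card m := by
  have hcard : #{i | 0 < hA.eigenvalues i} + #{i | hA.eigenvalues i < 0}
      + #{i | hA.eigenvalues i = 0} = Fintype.card m := by
    simp only [card_filter, ← sum_add_distrib]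
    rw [← card_univ, card_eq_sum_ones]
    refine sum_congr rfl fun i _ => ?_
    rcases lt_trichotomy (hA.eigenvalues i) 0 with h | h | h
    · simp [h, h.ne, h.not_gt]
    · simp [h]
    · simp [h, h.ne', h.not_gt]
  rw [matSig, dif_pos hA, hA.matNul_eq_card_eigenvalues_eq_zero]
  omega

end Matrix.IsHermitian

/-- If real symmetric `n × n` matrices `G` and `G'` agree in every entry except the
`(1,1)` entry, where `G'₁₁ = G₁₁ + 2`, and `nul G = nul G'`, then
`sig G' = sig G` or `sig G' = sig G + 2`. -/
theorem sig_eq_or_eq_add_two_of_diag_entry_add_two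
    (n : ℕ) (hn : 0 < n)
    (G G' : Matrix (Fin n) (Fin n) ℝ) (hG : G.IsSymm) (hG' : G'.IsSymm)
    (hdiag : G' ⟨0, hn⟩ ⟨0, hn⟩ = G ⟨0, hn⟩ ⟨0, hn⟩ + 2)
    (hoff : ∀ i j : Fin n, ¬(i = ⟨0, hn⟩ ∧ j = ⟨0, hn⟩) → G' i j = G i j)
    (hnul : matNul G = matNul G') :
    matSig G' = matSig G ∨ matSig G' = matSig G + 2 := by
  set i₀ : Fin n := ⟨0, hn⟩
  have hGh : G.IsHermitian := isHermitian_iff_isSymm.2 hG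
  have hGh' : G'.IsHermitian := isHermitian_iff_isSymm.2 hG'
  have hG'_eq : G' = G + single i₀ i₀ 2 := by
    ext i j
    by_cases hij : i = i₀ ∧ j = i₀
    · obtain ⟨rfl, rfl⟩ := hij
      simp [hdiag]
    · rw [Matrix.add_apply, single_apply, if_neg fun h => hij ⟨h.1.symm, h.2.symm⟩, add_zero,
        hoff i j hij]
  have hquad : ∀ x, G'.quadForm x = G.quadForm x + 2 * x i₀ ^ 2 := by
    simp [hG'_eq, quadForm_add, quadForm_single_self]
  have hle := hGh.card_pos_eigenvalues_le_of_quadForm_le hGh' fun x => by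
    rw [hquad]
    exact le_add_of_nonneg_right (by positivity)
  have hle_succ := hGh.card_pos_eigenvalues_le_add_one_of_quadForm_eqOn_ker hGh'
    (PiLp.projₗ 2 _ i₀) fun x hx => by
      rw [hquad, show x i₀ = 0 from hx]
      ring
  rw [hGh.matSig_eq, hGh'.matSig_eq, hnul]
  omega
end

section
/- Let G and G' be real symmetric n×n matrices that agree in every entry except the (1,1) entry, where G'₁₁ = G₁₁ + 2. If nul(G) ≠ nul(G'), then sig(G') = sig(G) + 1. -/
/-!
`G'` is `G` plus the positive semidefinite rank-one matrix `2 e₀ e₀ᵀ`. Write `p, m` (resp.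
`p', m'`) for the numbers of positive and negative eigenvalues of `G` (resp. `G'`). A subspace on
which one quadratic form is positive definite meets a subspace on which a pointwise larger form is
nonpositive only in `0`; applied to eigenspaces, on the whole space and on the hyperplane
`x₀ = 0` where the two forms agree, this gives `p ≤ p' ≤ p + 1` and `m' ≤ m ≤ m' + 1`.
So `sig G' - sig G = (p' - p) + (m - m')` lies in `{0, 1, 2}`, and the values `0` and `2` both
force `p + m = p' + m'`, i.e. equal nullities.
-/

open Module Finset

theorem Submodule.finrank_add_finrank_add_finrank_le {K V α : Type*} [DivisionRing K]
    [AddCommGroup V] [Module K V] [FiniteDimensional K V] [Preorder α] [Zero α]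
    {f g : V → α} {U W H : Submodule K V}
    (hU : ∀ x ∈ U, x ≠ 0 → 0 < f x) (hW : ∀ x ∈ W, g x ≤ 0) (hH : ∀ x ∈ H, f x ≤ g x) :
    finrank K U + finrank K W + finrank K H ≤ 2 * finrank K V := by
  have hdisj : Disjoint (U ⊓ H) W := by
    refine Submodule.disjoint_def.mpr fun x hxUH hxW => ?_
    by_contra hx
    exact (hU x hxUH.1 hx).not_ge ((hH x hxUH.2).trans (hW x hxW))
  have h₁ := Submodule.finrank_add_finrank_le_of_disjoint hdisj
  have h₂ := Submodule.finrank_sup_add_finrank_inf_eq U H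
  have h₃ := Submodule.finrank_le (U ⊔ H)
  omega

theorem Module.Basis.finrank_span_image_finset {K V ι : Type*} [DivisionRing K] [AddCommGroup V]
    [Module K V] (b : Basis ι K V) (s : Finset ι) :
    finrank K (Submodule.span K (b '' s)) = #s := by
  rw [Set.image_eq_range]
  exact (finrank_span_eq_card (b.linearIndependent.comp _ Subtype.val_injective)).trans (by simp)

section DiagonalForm

variable {K V ι : Type*} [Field K] [LinearOrder K] [IsStrictOrderedRing K]
  [AddCommGroup V] [Module K V] [Fintype ι] (b : Basis ι K V) (w : ι → K)

theorem Module.Basis.sum_mul_repr_sq_nonpos_of_mem_span {s : Set ι} (hs : ∀ i ∈ s, w i ≤ 0)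
    {x : V} (hx : x ∈ Submodule.span K (b '' s)) : ∑ i, w i * b.repr x i ^ 2 ≤ 0 := by
  rw [b.mem_span_image] at hx
  refine Finset.sum_nonpos fun i _ => ?_
  by_cases hi : i ∈ s
  · exact mul_nonpos_of_nonpos_of_nonneg (hs i hi) (sq_nonneg _)
  · simp [Finsupp.notMem_support_iff.mp fun h => hi (hx h)]

theorem Module.Basis.sum_mul_repr_sq_pos_of_mem_span {s : Set ι} (hs : ∀ i ∈ s, 0 < w i)
    {x : V} (hx : x ∈ Submodule.span K (b '' s)) (hx0 : x ≠ 0) : 0 < ∑ i, w i * b.repr x i ^ 2 := by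
  rw [b.mem_span_image] at hx
  obtain ⟨j, hj⟩ : ∃ j, b.repr x j ≠ 0 := Finsupp.ne_iff.mp (b.repr.map_ne_zero_iff.mpr hx0)
  have hterm : ∀ i, 0 ≤ w i * b.repr x i ^ 2 := fun i => by
    by_cases hi : i ∈ s
    · exact mul_nonneg (hs i hi).le (sq_nonneg _)
    · simp [Finsupp.notMem_support_iff.mp fun h => hi (hx h)]
  have hj_pos : 0 < w j * b.repr x j ^ 2 :=
    mul_pos (hs j (hx (Finsupp.mem_support_iff.mpr hj))) (by positivity)
  exact Finset.sum_pos' (fun i _ => hterm i) ⟨j, mem_univ j, hj_pos⟩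

theorem Module.Basis.card_pos_add_finrank_le {κ : Type*} [Fintype κ] (b' : Basis κ K V)
    (w' : κ → K) (H : Submodule K V)
    (hH : ∀ x ∈ H, ∑ k, w' k * b'.repr x k ^ 2 ≤ ∑ i, w i * b.repr x i ^ 2) :
    #{k | 0 < w' k} + finrank K H ≤ #{i | 0 < w i} + Fintype.card ι := by
  have := b.finiteDimensional_of_finite
  have hdim := Submodule.finrank_add_finrank_add_finrank_le
    (U := Submodule.span K (b' '' ↑({k | 0 < w' k} : Finset κ)))
    (W := Submodule.span K (b '' ↑({i | ¬ 0 < w i} : Finset ι)))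
    (fun _ hx hx0 => b'.sum_mul_repr_sq_pos_of_mem_span w' (by simp) hx hx0)
    (fun _ hx => b.sum_mul_repr_sq_nonpos_of_mem_span w (fun i hi => by simpa using hi) hx) hH
  have hsplit := Finset.card_filter_add_card_filter_not (s := univ) (p := fun i => 0 < w i)
  rw [b'.finrank_span_image_finset, b.finrank_span_image_finset, finrank_eq_card_basis b] at hdim
  rw [card_univ] at hsplit
  omega

end DiagonalForm

open scoped RealInnerProductSpace

namespace Matrix.IsHermitian

variable {ι : Type} [Fintype ι] [DecidableEq ι] {M N : Matrix ι ι ℝ}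

theorem inner_toEuclideanLin_self (hM : M.IsHermitian) (x : EuclideanSpace ℝ ι) :
    ⟪x, M.toEuclideanLin x⟫ =
      ∑ i, hM.eigenvalues i * hM.eigenvectorBasis.toBasis.repr x i ^ 2 := by
  set b := hM.eigenvectorBasis
  have hb : ∀ i, ⟪b i, M.toEuclideanLin x⟫ = hM.eigenvalues i * ⟪b i, x⟫ := fun i => by
    rw [← isSymmetric_toEuclideanLin_iff.mpr hM, ← real_inner_smul_left]
    exact congrArg (⟪·, x⟫) (congrArg (WithLp.toLp 2) (hM.mulVec_eigenvectorBasis i))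
  rw [← b.sum_inner_mul_inner]
  refine sum_congr rfl fun i _ => ?_
  rw [hb, OrthonormalBasis.coe_toBasis_repr_apply, b.repr_apply_apply, real_inner_comm]
  ring

noncomputable def posIndex (hM : M.IsHermitian) : ℕ := #{i | 0 < hM.eigenvalues i}

noncomputable def negIndex (hM : M.IsHermitian) : ℕ := #{i | hM.eigenvalues i < 0}

theorem posIndex_add_finrank_le (hM : M.IsHermitian) (hN : N.IsHermitian)
    (H : Submodule ℝ (EuclideanSpace ℝ ι))
    (hH : ∀ x ∈ H, ⟪x, N.toEuclideanLin x⟫ ≤ ⟪x, M.toEuclideanLin x⟫) :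
    hN.posIndex + finrank ℝ H ≤ hM.posIndex + Fintype.card ι :=
  hM.eigenvectorBasis.toBasis.card_pos_add_finrank_le _ hN.eigenvectorBasis.toBasis _ H
    fun x hx => by
      rw [← hM.inner_toEuclideanLin_self, ← hN.inner_toEuclideanLin_self]
      exact hH x hx

theorem negIndex_add_finrank_le (hM : M.IsHermitian) (hN : N.IsHermitian)
    (H : Submodule ℝ (EuclideanSpace ℝ ι))
    (hH : ∀ x ∈ H, ⟪x, M.toEuclideanLin x⟫ ≤ ⟪x, N.toEuclideanLin x⟫) :
    hN.negIndex + finrank ℝ H ≤ hM.negIndex + Fintype.card ι := by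
  have := hM.eigenvectorBasis.toBasis.card_pos_add_finrank_le (-hM.eigenvalues)
    hN.eigenvectorBasis.toBasis (-hN.eigenvalues) H fun x hx => by
      simp only [Pi.neg_apply, neg_mul, sum_neg_distrib, neg_le_neg_iff]
      rw [← hM.inner_toEuclideanLin_self, ← hN.inner_toEuclideanLin_self]
      exact hH x hx
  simpa only [Pi.neg_apply, neg_pos, negIndex, posIndex] using this

theorem rank_eq_posIndex_add_negIndex (hM : M.IsHermitian) :
    M.rank = hM.posIndex + hM.negIndex := by
  rw [hM.rank_eq_card_non_zero_eigs, Fintype.card_subtype, posIndex, negIndex,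
    ← card_union_of_disjoint (disjoint_filter.mpr fun _ _ h₁ h₂ => h₁.not_gt h₂), ← filter_or]
  simp only [ne_iff_lt_or_gt, or_comm]

theorem matSig_eq_s4 (hM : M.IsHermitian) : matSig M = hM.posIndex - hM.negIndex := by
  rw [matSig, dif_pos hM, posIndex, negIndex]

theorem matNul_add_posIndex_add_negIndex (hM : M.IsHermitian) :
    matNul M + hM.posIndex + hM.negIndex = Fintype.card ι := by
  have := M.rank_le_card_width
  rw [matNul, hM.rank_eq_posIndex_add_negIndex] at *
  omega

end Matrix.IsHermitian

section RankOneUpdate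

open Matrix

variable {ι : Type} [Fintype ι] [DecidableEq ι] {M N : Matrix ι ι ℝ} {z : ι} {c : ℝ}

theorem Matrix.inner_toEuclideanLin_add_single_self (M : Matrix ι ι ℝ) (z : ι) (c : ℝ)
    (x : EuclideanSpace ℝ ι) :
    ⟪x, (M + single z z c).toEuclideanLin x⟫ = ⟪x, M.toEuclideanLin x⟫ + c * x z ^ 2 := by
  rw [map_add, LinearMap.add_apply, inner_add_right, add_right_inj]
  simp only [EuclideanSpace.inner_eq_star_dotProduct, ofLp_toLpLin, toLin'_apply, star_trivial,
    single_mulVec_eq, smul_dotProduct, single_dotProduct, one_mul, smul_eq_mul]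
  ring

theorem EuclideanSpace.finrank_ker_projₗ_add_one (z : ι) :
    finrank ℝ (LinearMap.ker (EuclideanSpace.projₗ (𝕜 := ℝ) z)) + 1 = Fintype.card ι := by
  rw [Module.Dual.finrank_ker_add_one_of_ne_zero, finrank_euclideanSpace]
  intro h
  simpa using LinearMap.congr_fun h (EuclideanSpace.single z 1)

namespace Matrix.IsHermitian

theorem posIndex_le_posIndex_of_eq_add_single (hM : M.IsHermitian) (hN : N.IsHermitian)
    (hc : 0 ≤ c) (hMN : N = M + single z z c) : hM.posIndex ≤ hN.posIndex := by
  have := posIndex_add_finrank_le hN hM ⊤ fun x _ => by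
    rw [hMN, inner_toEuclideanLin_add_single_self]
    nlinarith [sq_nonneg (x z)]
  simpa [finrank_euclideanSpace] using this

theorem posIndex_le_posIndex_add_one_of_eq_add_single (hM : M.IsHermitian)
    (hN : N.IsHermitian) (hMN : N = M + single z z c) : hN.posIndex ≤ hM.posIndex + 1 := by
  have := posIndex_add_finrank_le hM hN (LinearMap.ker (EuclideanSpace.projₗ z))
      fun x (hx : x z = 0) => by
    rw [hMN, inner_toEuclideanLin_add_single_self, hx]
    simp
  have := EuclideanSpace.finrank_ker_projₗ_add_one z
  omega

theorem negIndex_le_negIndex_of_eq_add_single (hM : M.IsHermitian) (hN : N.IsHermitian)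
    (hc : 0 ≤ c) (hMN : N = M + single z z c) : hN.negIndex ≤ hM.negIndex := by
  have := negIndex_add_finrank_le hM hN ⊤ fun x _ => by
    rw [hMN, inner_toEuclideanLin_add_single_self]
    nlinarith [sq_nonneg (x z)]
  simpa [finrank_euclideanSpace] using this

theorem negIndex_le_negIndex_add_one_of_eq_add_single (hM : M.IsHermitian)
    (hN : N.IsHermitian) (hMN : N = M + single z z c) : hM.negIndex ≤ hN.negIndex + 1 := by
  have := negIndex_add_finrank_le hN hM (LinearMap.ker (EuclideanSpace.projₗ z))
      fun x (hx : x z = 0) => by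
    rw [hMN, inner_toEuclideanLin_add_single_self, hx]
    simp
  have := EuclideanSpace.finrank_ker_projₗ_add_one z
  omega

end Matrix.IsHermitian

end RankOneUpdate

/-- If real symmetric `n × n` matrices `G` and `G'` agree in every entry except the
`(1,1)` entry, where `G'₁₁ = G₁₁ + 2`, and `nul G ≠ nul G'`, then
`sig G' = sig G + 1`. -/
theorem sig_eq_add_one_of_diag_entry_add_two
    (n : ℕ) (hn : 0 < n)
    (G G' : Matrix (Fin n) (Fin n) ℝ) (hG : G.IsSymm) (hG' : G'.IsSymm)
    (hdiag : G' ⟨0, hn⟩ ⟨0, hn⟩ = G ⟨0, hn⟩ ⟨0, hn⟩ + 2)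
    (hoff : ∀ i j : Fin n, ¬(i = ⟨0, hn⟩ ∧ j = ⟨0, hn⟩) → G' i j = G i j)
    (hnul : matNul G ≠ matNul G') :
    matSig G' = matSig G + 1 := by
  set z : Fin n := ⟨0, hn⟩
  have hG'_eq : G' = G + Matrix.single z z 2 := by
    ext i j
    by_cases hij : i = z ∧ j = z
    · obtain ⟨rfl, rfl⟩ := hij
      simpa using hdiag
    · have : ¬(z = i ∧ z = j) := fun h => hij ⟨h.1.symm, h.2.symm⟩
      simp [hoff i j hij, Matrix.single_apply_of_ne (h := this)]
  have hGh : G.IsHermitian := Matrix.isHermitian_iff_isSymm.mpr hG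
  have hG'h : G'.IsHermitian := Matrix.isHermitian_iff_isSymm.mpr hG'
  have hp₁ := hGh.posIndex_le_posIndex_of_eq_add_single hG'h zero_le_two hG'_eq
  have hp₂ := hGh.posIndex_le_posIndex_add_one_of_eq_add_single hG'h hG'_eq
  have hm₁ := hGh.negIndex_le_negIndex_of_eq_add_single hG'h zero_le_two hG'_eq
  have hm₂ := hGh.negIndex_le_negIndex_add_one_of_eq_add_single hG'h hG'_eq
  have hdim := hGh.matNul_add_posIndex_add_negIndex
  have hdim' := hG'h.matNul_add_posIndex_add_negIndex
  rw [hGh.matSig_eq_s4, hG'h.matSig_eq_s4]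
  omega
end

section
/- Let n ≥ 1 and g ≥ 1, let A be a symmetric n×n integer matrix, B a symmetric 2g×2g integer matrix, C an arbitrary n×2g integer matrix, and let J_g = [[0, I_g], [−I_g, 0]] be the standard 2g×2g symplectic matrix. Then the symmetric (n+4g)×(n+4g) block matrix M = [[A, C, 0], [Cᵀ, B, J_g], [0, J_gᵀ, 0]] is unimodular congruent over ℤ to the block matrix M₀ = [[A, 0, 0], [0, B, J_g], [0, J_gᵀ, 0]]. -/
/-!
The last `2g` coordinates pair with the middle ones only through `J`, and `J Jᵀ = 1`. Hence the
unitriangular (so unimodular) shear adding `-Jᵀ Cᵀ` times the first `n` coordinates to the last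
`2g` clears the cross term `C`, while `A` survives because that shear is orthogonal to the `C`
block.
-/

namespace Matrix

variable {l m p R : Type*} [Fintype l] [Fintype m] [DecidableEq l] [DecidableEq m]

theorem transpose_fromBlocks_one_zero_mul_fromBlocks_mul [Semiring R]
    (A : Matrix l l R) (X : Matrix l m R) (W : Matrix m l R) (D : Matrix m m R)
    (Y : Matrix m l R) :
    (fromBlocks 1 0 Y 1)ᵀ * fromBlocks A X W D * fromBlocks 1 0 Y 1 =
      fromBlocks (A + Yᵀ * W + (X + Yᵀ * D) * Y) (X + Yᵀ * D) (W + D * Y) D := by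
  simp only [fromBlocks_transpose, fromBlocks_multiply, transpose_one, transpose_zero,
    Matrix.one_mul, Matrix.mul_one, Matrix.zero_mul, Matrix.mul_zero, zero_add, Matrix.add_mul]

theorem transpose_fromBlocks_one_zero_mul_fromBlocks_mul_of_eq_neg [Ring R]
    {A : Matrix l l R} {X : Matrix l m R} {W : Matrix m l R} {D : Matrix m m R}
    {Y : Matrix m l R} (hX : Yᵀ * D = -X) (hW : D * Y = -W) (hYW : Yᵀ * W = 0) :
    (fromBlocks 1 0 Y 1)ᵀ * fromBlocks A X W D * fromBlocks 1 0 Y 1 = fromBlocks A 0 0 D := by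
  rw [transpose_fromBlocks_one_zero_mul_fromBlocks_mul, hX, hW, hYW, add_neg_cancel,
    add_neg_cancel, Matrix.zero_mul, add_zero, add_zero]

theorem det_fromBlocks_one_zero_one [CommRing R] (Y : Matrix m l R) :
    (fromBlocks 1 0 Y 1).det = 1 := by
  rw [det_fromBlocks_zero₁₂, det_one, det_one, mul_one]

theorem fromBlocks_zero_one_neg_one_zero_mul_transpose [Ring R] [DecidableEq p] [Fintype p] :
    (fromBlocks 0 1 (-1) 0 : Matrix (p ⊕ p) (p ⊕ p) R) * (fromBlocks 0 1 (-1) 0)ᵀ = 1 := by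
  simp [fromBlocks_transpose, fromBlocks_multiply, ← fromBlocks_one]

theorem transpose_mul_fromBlocks_hyperbolic_mul [CommRing R]
    (A : Matrix l l R) (B J : Matrix m m R) (hJ : J * Jᵀ = 1) (C : Matrix l m R) :
    (fromBlocks 1 0 (fromRows (0 : Matrix m l R) (-(Jᵀ * Cᵀ))) 1)ᵀ *
        fromBlocks A (fromCols C 0) (fromRows Cᵀ 0) (fromBlocks B J Jᵀ 0) *
        fromBlocks 1 0 (fromRows 0 (-(Jᵀ * Cᵀ))) 1 =
      fromBlocks A 0 0 (fromBlocks B J Jᵀ 0) := by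
  have hJC : J * (Jᵀ * Cᵀ) = Cᵀ := by rw [← Matrix.mul_assoc, hJ, Matrix.one_mul]
  have hCJ : C * J * Jᵀ = C := by rw [Matrix.mul_assoc, hJ, Matrix.mul_one]
  apply transpose_fromBlocks_one_zero_mul_fromBlocks_mul_of_eq_neg
  · simp [transpose_fromRows, fromCols_mul_fromBlocks, transpose_mul, hCJ, fromCols_neg]
  · simp [fromBlocks_mul_fromRows, hJC, fromRows_neg]
  · simp [transpose_fromRows, fromCols_mul_fromRows]

end Matrix

open Matrix in
theorem blockMatrix_unimodular_congruent_to_decoupled_general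
    (n g : ℕ)
    (A : Matrix (Fin n) (Fin n) ℤ)
    (B : Matrix (Fin g ⊕ Fin g) (Fin g ⊕ Fin g) ℤ)
    (C : Matrix (Fin n) (Fin g ⊕ Fin g) ℤ)
    (J : Matrix (Fin g ⊕ Fin g) (Fin g ⊕ Fin g) ℤ)
    (hJ : J = Matrix.fromBlocks 0 1 (-1) 0)
    (M : Matrix (Fin n ⊕ ((Fin g ⊕ Fin g) ⊕ (Fin g ⊕ Fin g)))
        (Fin n ⊕ ((Fin g ⊕ Fin g) ⊕ (Fin g ⊕ Fin g))) ℤ)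
    (hM : M = Matrix.fromBlocks A (Matrix.fromCols C 0) (Matrix.fromRows Cᵀ 0)
        (Matrix.fromBlocks B J Jᵀ 0)) :
    ∃ U : Matrix (Fin n ⊕ ((Fin g ⊕ Fin g) ⊕ (Fin g ⊕ Fin g)))
        (Fin n ⊕ ((Fin g ⊕ Fin g) ⊕ (Fin g ⊕ Fin g))) ℤ,
      (U.det = 1 ∨ U.det = -1) ∧
        Matrix.fromBlocks A 0 0 (Matrix.fromBlocks B J Jᵀ 0) = Uᵀ * M * U := by
  have hJJ : J * Jᵀ = 1 := hJ ▸ fromBlocks_zero_one_neg_one_zero_mul_transpose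
  subst hM
  exact ⟨_, Or.inl (det_fromBlocks_one_zero_one _),
    (transpose_mul_fromBlocks_hyperbolic_mul A B J hJJ C).symm⟩

open Matrix in
/-- The symmetric block matrix `M = [[A, C, 0], [Cᵀ, B, J_g], [0, J_gᵀ, 0]]` over `ℤ` is
unimodular congruent to `M₀ = [[A, 0, 0], [0, B, J_g], [0, J_gᵀ, 0]]`. -/
theorem blockMatrix_unimodular_congruent_to_decoupled
    (n g : ℕ) (hn : 1 ≤ n) (hg : 1 ≤ g)
    (A : Matrix (Fin n) (Fin n) ℤ) (hA : A.IsSymm)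
    (B : Matrix (Fin g ⊕ Fin g) (Fin g ⊕ Fin g) ℤ) (hB : B.IsSymm)
    (C : Matrix (Fin n) (Fin g ⊕ Fin g) ℤ)
    (J : Matrix (Fin g ⊕ Fin g) (Fin g ⊕ Fin g) ℤ)
    (hJ : J = Matrix.fromBlocks 0 1 (-1) 0)
    (M : Matrix (Fin n ⊕ ((Fin g ⊕ Fin g) ⊕ (Fin g ⊕ Fin g)))
        (Fin n ⊕ ((Fin g ⊕ Fin g) ⊕ (Fin g ⊕ Fin g))) ℤ)
    (hM : M = Matrix.fromBlocks A (Matrix.fromCols C 0) (Matrix.fromRows Cᵀ 0)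
        (Matrix.fromBlocks B J Jᵀ 0)) :
    ∃ U : Matrix (Fin n ⊕ ((Fin g ⊕ Fin g) ⊕ (Fin g ⊕ Fin g)))
        (Fin n ⊕ ((Fin g ⊕ Fin g) ⊕ (Fin g ⊕ Fin g))) ℤ,
      (U.det = 1 ∨ U.det = -1) ∧
        Matrix.fromBlocks A 0 0 (Matrix.fromBlocks B J Jᵀ 0) = Uᵀ * M * U :=
  blockMatrix_unimodular_congruent_to_decoupled_general n g A B C J hJ M hM
end

section
/- Let n ≥ 1 and g ≥ 1, let A be a real symmetric n×n matrix, B a real symmetric 2g×2g matrix, C an arbitrary real n×2g matrix, and let J_g = [[0, I_g], [−I_g, 0]] be the standard 2g×2g symplectic matrix. Then the symmetric (n+4g)×(n+4g) block matrix M = [[A, C, 0], [Cᵀ, B, J_g], [0, J_gᵀ, 0]] satisfies nul(M) = nul(A). -/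
/-! The lower-right corner `K = [[B, J], [Jᵀ, 0]]` of `M` is invertible, with inverse
`[[0, J⁻ᵀ], [J⁻¹, -J⁻¹ B J⁻ᵀ]]`. Since the upper-left block of `K⁻¹` vanishes, the Schur
complement of `K` in `M` is `A - [C 0] K⁻¹ [Cᵀ; 0] = A`, so the LDU factorization of `M` gives
`rank M = rank A + rank K = rank A + 4g`. -/

open Module LinearMap

namespace Matrix

variable {l m n o : Type*}

section CommRing

variable {α : Type*} [CommRing α]

theorem rank_fromBlocks_eq_rank_schur_of_invertible₂₂ [Fintype l] [Fintype m] [Fintype n]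
    [DecidableEq l] [DecidableEq m] [DecidableEq n] (A : Matrix l m α) (B : Matrix l n α)
    (C : Matrix n m α) (D : Matrix n n α) [Invertible D] :
    (fromBlocks A B C D).rank = (fromBlocks (A - B * ⅟D * C) 0 0 D).rank := by
  rw [fromBlocks_eq_of_invertible₂₂, rank_mul_eq_left_of_isUnit_det _ _ (by simp),
    rank_mul_eq_right_of_isUnit_det _ _ (by simp)]

theorem fromBlocks_zero₂₂_mul_inv [Fintype n] [DecidableEq n] (B J J' : Matrix n n α)
    [Invertible J] [Invertible J'] :
    fromBlocks B J J' 0 * fromBlocks 0 (⅟J') (⅟J) (-(⅟J * B * ⅟J')) = 1 := by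
  simp [fromBlocks_multiply, ← Matrix.mul_assoc]

theorem invOf_fromBlocks_zero₂₂_eq [Fintype n] [DecidableEq n] (B J J' : Matrix n n α)
    [Invertible J] [Invertible J'] [Invertible (fromBlocks B J J' 0)] :
    ⅟(fromBlocks B J J' 0) = fromBlocks 0 (⅟J') (⅟J) (-(⅟J * B * ⅟J')) :=
  invOf_eq_right_inv (fromBlocks_zero₂₂_mul_inv B J J')

end CommRing

section Field

variable {K : Type*} [Field K]

theorem ker_mulVecLin_fromBlocks_zero_zero [Fintype m] [Fintype o] (A : Matrix l m K)
    (D : Matrix n o K) (hD : ker D.mulVecLin = ⊥) :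
    ker (fromBlocks A 0 0 D).mulVecLin =
      -- the image of `ker A` under `x ↦ Sum.elim x 0`
      (ker A.mulVecLin).map
        ((LinearEquiv.sumArrowLequivProdArrow m o K K).symm.toLinearMap ∘ₗ inl K _ _) := by
  ext v
  simp only [mem_ker, mulVecLin_apply, fromBlocks_mulVec, zero_mulVec, add_zero, zero_add,
    Submodule.mem_map, coe_comp, LinearEquiv.coe_coe, coe_inl, Function.comp_apply]
  constructor
  · intro hv
    obtain ⟨hA, hDv⟩ := Sum.elim_eq_iff.1 (hv.trans Sum.elim_zero_zero.symm)
    have hvr : v ∘ Sum.inr = 0 := by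
      simpa using (ker_eq_bot'.1 hD) _ hDv
    refine ⟨v ∘ Sum.inl, hA, ?_⟩
    ext (i | i)
    · rfl
    · exact (congrFun hvr i).symm
  · rintro ⟨y, hy, rfl⟩
    change A *ᵥ y ⊕ᵥ D *ᵥ 0 = 0
    simp [hy]

theorem rank_fromBlocks_zero_zero_of_ker_eq_bot [Fintype m] [Fintype o] (A : Matrix l m K)
    (D : Matrix n o K) (hD : ker D.mulVecLin = ⊥) :
    (fromBlocks A 0 0 D).rank = A.rank + Fintype.card o := by
  have hM := finrank_range_add_finrank_ker (fromBlocks A 0 0 D).mulVecLin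
  have hA := finrank_range_add_finrank_ker A.mulVecLin
  have hker : finrank K (ker (fromBlocks A 0 0 D).mulVecLin) = finrank K (ker A.mulVecLin) := by
    rw [ker_mulVecLin_fromBlocks_zero_zero A D hD]
    have hι : Function.Injective
        ((LinearEquiv.sumArrowLequivProdArrow m o K K).symm.toLinearMap ∘ₗ inl K _ _) := by
      rw [coe_comp, LinearEquiv.coe_coe]
      exact (LinearEquiv.injective _).comp inl_injective
    exact (Submodule.equivMapOfInjective _ hι _).finrank_eq.symm
  simp only [finrank_fintype_fun_eq_card, Fintype.card_sum] at hM hA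
  rw [rank, rank]
  omega

theorem rank_fromBlocks_fromCols_zero_fromRows_zero [Fintype l] [Fintype m] [Fintype n]
    [DecidableEq l] [DecidableEq m] [DecidableEq n] (A : Matrix l m K) (C : Matrix l n K)
    (C' : Matrix n m K) (B J J' : Matrix n n K) [Invertible J] [Invertible J'] :
    (fromBlocks A (fromCols C 0) (fromRows C' 0) (fromBlocks B J J' 0)).rank =
      A.rank + 2 * Fintype.card n := by
  let := invertibleOfRightInverse _ _ (fromBlocks_zero₂₂_mul_inv B J J')
  rw [rank_fromBlocks_eq_rank_schur_of_invertible₂₂, invOf_fromBlocks_zero₂₂_eq,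
    rank_fromBlocks_zero_zero_of_ker_eq_bot _ _
      (ker_eq_bot.2 (mulVec_injective_of_invertible _))]
  simp [fromCols_mul_fromBlocks, fromCols_mul_fromRows, two_mul]

end Field

end Matrix

open Matrix in
theorem blockMatrix_nul_eq_nul_general
    (n g : ℕ)
    (A : Matrix (Fin n) (Fin n) ℝ)
    (B : Matrix (Fin g ⊕ Fin g) (Fin g ⊕ Fin g) ℝ)
    (C : Matrix (Fin n) (Fin g ⊕ Fin g) ℝ)
    (J : Matrix (Fin g ⊕ Fin g) (Fin g ⊕ Fin g) ℝ)
    (hJ : J = Matrix.fromBlocks 0 1 (-1) 0)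
    (M : Matrix (Fin n ⊕ ((Fin g ⊕ Fin g) ⊕ (Fin g ⊕ Fin g)))
        (Fin n ⊕ ((Fin g ⊕ Fin g) ⊕ (Fin g ⊕ Fin g))) ℝ)
    (hM : M = Matrix.fromBlocks A (Matrix.fromCols C 0) (Matrix.fromRows Cᵀ 0)
        (Matrix.fromBlocks B J Jᵀ 0)) :
    matNul M = matNul A := by
  have hJ_mul_transpose : J * Jᵀ = 1 := by
    simp [hJ, fromBlocks_transpose, fromBlocks_multiply, ← fromBlocks_one]
  let := invertibleOfRightInverse J Jᵀ hJ_mul_transpose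
  have hrank : M.rank = A.rank + 2 * Fintype.card (Fin g ⊕ Fin g) := by
    rw [hM, rank_fromBlocks_fromCols_zero_fromRows_zero]
  have hA := A.rank_le_card_width
  simp only [matNul, hrank, Fintype.card_sum, Fintype.card_fin] at hA ⊢
  omega

open Matrix in
/-- The symmetric block matrix `M = [[A, C, 0], [Cᵀ, B, J_g], [0, J_gᵀ, 0]]` over `ℝ`
satisfies `nul M = nul A`. -/
theorem blockMatrix_nul_eq_nul
    (n g : ℕ) (hn : 1 ≤ n) (hg : 1 ≤ g)
    (A : Matrix (Fin n) (Fin n) ℝ) (hA : A.IsSymm)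
    (B : Matrix (Fin g ⊕ Fin g) (Fin g ⊕ Fin g) ℝ) (hB : B.IsSymm)
    (C : Matrix (Fin n) (Fin g ⊕ Fin g) ℝ)
    (J : Matrix (Fin g ⊕ Fin g) (Fin g ⊕ Fin g) ℝ)
    (hJ : J = Matrix.fromBlocks 0 1 (-1) 0)
    (M : Matrix (Fin n ⊕ ((Fin g ⊕ Fin g) ⊕ (Fin g ⊕ Fin g)))
        (Fin n ⊕ ((Fin g ⊕ Fin g) ⊕ (Fin g ⊕ Fin g))) ℝ)
    (hM : M = Matrix.fromBlocks A (Matrix.fromCols C 0) (Matrix.fromRows Cᵀ 0)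
        (Matrix.fromBlocks B J Jᵀ 0)) :
    matNul M = matNul A :=
  blockMatrix_nul_eq_nul_general n g A B C J hJ M hM
end
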